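/- Let n ≥ 2 and let λ, ν ∈ ℂ with ν − λ a nonnegative integer. Then x_n·𝒦_{λ,ν} = −2 γ(λ − (n−1)/2, ν−λ)·𝒦_{λ+1,ν} as tempered distributions on ℝ^n. -/

import Mathlib

/-- Partial derivative ∂_p of a complex-valued function on ℝ^n. -/
noncomputable def pd {n : ℕ} (p : Fin n) (f : (Fin n → ℝ) → ℂ) : (Fin n → ℝ) → ℂ :=
  fun x => fderiv ℝ f x (Pi.single p 1)

/-- Δ' = ∂_1² + ⋯ + ∂_{n−1}², the Laplacian in the first n−1 variables on ℝ^n. -/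
noncomputable def lapP {n : ℕ} (f : (Fin n → ℝ) → ℂ) : (Fin n → ℝ) → ℂ :=
  fun x => ∑ j ∈ Finset.univ.filter (fun j : Fin n => (j : ℕ) < n - 1), pd j (pd j f) x

/-- ∂_n, the partial derivative in the last variable on ℝ^n. -/
noncomputable def pdLast {n : ℕ} (f : (Fin n → ℝ) → ℂ) : (Fin n → ℝ) → ℂ :=
  if h : 0 < n then pd ⟨n - 1, by omega⟩ f else 0

/-- The coefficient of z^{l−2k} in the renormalized Gegenbauer polynomial
C̃_l^α(z) = Σ_{k=0}^{⌊l/2⌋} (−1)^k (∏_{m=⌊(l+1)/2⌋}^{l−k−1}(α+m)) (2z)^{l−2k}/(k!(l−2k)!). -/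
noncomputable def gegenCoeff (α : ℂ) (l k : ℕ) : ℂ :=
  (-1 : ℂ) ^ k * (∏ m ∈ Finset.Ico ((l + 1) / 2) (l - k), (α + (m : ℂ))) *
    2 ^ (l - 2 * k) / ((Nat.factorial k : ℂ) * (Nat.factorial (l - 2 * k) : ℂ))

/-- The action on a test function `φ` of the tempered distribution
`𝒦_{λ,ν} = Σ_{k=0}^{⌊l/2⌋} a_k (−1)^k (Δ')^k ∂_n^{l−2k} δ` on ℝ^n, where `l = ν − λ`
and `a_k` are the coefficients of `C̃_l^{λ−(n−1)/2}`; each `∂` contributes a sign `−1`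
and δ evaluates at 0.  By convention `𝒦_{λ,ν} = 0` when `l < 0`. -/
noncomputable def Kact (n : ℕ) (lam : ℂ) (l : ℤ) (φ : (Fin n → ℝ) → ℂ) : ℂ :=
  if 0 ≤ l then
    ∑ k ∈ Finset.range (l.toNat / 2 + 1),
      gegenCoeff (lam - ((n : ℂ) - 1) / 2) l.toNat k *
        ((-1 : ℂ) ^ k * ((-1 : ℂ) ^ (l.toNat - 2 * k) *
          (pdLast (n := n))^[l.toNat - 2 * k] ((lapP (n := n))^[k] φ) 0))
  else 0

/-- γ(μ, a) := 1 if a is odd, μ + a/2 if a is even. -/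
noncomputable def gam (mu : ℂ) (a : ℕ) : ℂ := if a % 2 = 1 then 1 else mu + ((a / 2 : ℕ) : ℂ)


/-!
Multiplication by `x_n` commutes with `Δ'`, and `∂_n^m (x_n f) = m ∂_n^{m-1} f + x_n ∂_n^m f`;
evaluating at `0` gives `x_n · (Δ')^k ∂_n^m δ = -m (Δ')^k ∂_n^{m-1} δ`. Hence `x_n · 𝒦_{λ,ν}` is
the distribution built in the same way from `-(d/dz) C̃_l^α`, `α = λ - (n-1)/2`, and the claim is
the derivative formula `(d/dz) C̃_l^α = 2 γ(α, l) C̃_{l-1}^{α+1}` for renormalized Gegenbauer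
polynomials, which reduces to splitting off one factor `α + l/2` of the product in the
coefficients when `l` is even.
-/

open scoped ContDiff

variable {n : ℕ} {f g : (Fin n → ℝ) → ℂ}

theorem pd_add (p : Fin n) (hf : Differentiable ℝ f)
    (hg : Differentiable ℝ g) :
    pd p (fun x => f x + g x) = fun x => pd p f x + pd p g x := by
  funext x
  simp only [pd, fderiv_fun_add (hf x) (hg x), add_apply]

theorem pd_const_mul (p : Fin n) (hf : Differentiable ℝ f) (c : ℂ) :
    pd p (fun x => c * f x) = fun x => c * pd p f x := by
  funext x
  simp only [pd, fderiv_const_mul (hf x) c, smul_apply, smul_eq_mul]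

theorem pd_coord_mul (i p : Fin n) (hf : Differentiable ℝ f) :
    pd p (fun x => (x i : ℂ) * f x)
      = fun x => ((Pi.single p (1 : ℝ) : Fin n → ℝ) i : ℂ) * f x + x i * pd p f x := by
  funext x
  have hcoord : HasFDerivAt (fun y : Fin n → ℝ => (y i : ℂ))
      (Complex.ofRealCLM.comp (ContinuousLinearMap.proj i)) x :=
    Complex.ofRealCLM.hasFDerivAt.comp x (hasFDerivAt_apply i x)
  simp only [pd]
  rw [fderiv_fun_mul hcoord.differentiableAt (hf x), hcoord.fderiv]
  simp only [add_apply, smul_apply, smul_eq_mul,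
    ContinuousLinearMap.comp_apply, ContinuousLinearMap.proj_apply, Complex.ofRealCLM_apply]
  ring

theorem pd_coord_mul_of_ne {i p : Fin n} (hip : i ≠ p) (hf : Differentiable ℝ f) :
    pd p (fun x => (x i : ℂ) * f x) = fun x => x i * pd p f x := by
  simp [pd_coord_mul i p hf, hip]

theorem pd_coord_mul_self (i : Fin n) (hf : Differentiable ℝ f) :
    pd i (fun x => (x i : ℂ) * f x) = fun x => f x + x i * pd i f x := by
  simp [pd_coord_mul i i hf]

theorem contDiff_pd (hf : ContDiff ℝ ∞ f) (p : Fin n) :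
    ContDiff ℝ ∞ (pd p f) :=
  (hf.fderiv_right le_rfl).clm_apply contDiff_const

theorem contDiff_iterate_pd (hf : ContDiff ℝ ∞ f) (p : Fin n) (m : ℕ) :
    ContDiff ℝ ∞ ((pd p)^[m] f) :=
  Function.Iterate.rec (fun g => ContDiff ℝ ∞ g) hf (fun _ hg => contDiff_pd hg p) m

theorem contDiff_lapP (hf : ContDiff ℝ ∞ f) : ContDiff ℝ ∞ (lapP f) :=
  ContDiff.sum fun j _ => contDiff_pd (contDiff_pd hf j) j

theorem contDiff_iterate_lapP (hf : ContDiff ℝ ∞ f) (k : ℕ) :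
    ContDiff ℝ ∞ (lapP^[k] f) :=
  Function.Iterate.rec (fun g => ContDiff ℝ ∞ g) hf (fun _ hg => contDiff_lapP hg) k

theorem pdLast_eq_pd (hn : 0 < n) : pdLast (n := n) = pd ⟨n - 1, by omega⟩ := by
  funext f
  rw [pdLast, dif_pos hn]

theorem lapP_coord_mul {i : Fin n} (hi : n - 1 ≤ i) (hf : ContDiff ℝ ∞ f) :
    lapP (fun x => (x i : ℂ) * f x) = fun x => x i * lapP f x := by
  funext x
  simp only [lapP, Finset.mul_sum]
  refine Finset.sum_congr rfl fun j hj => ?_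
  have hij : i ≠ j := by
    have := (Finset.mem_filter.mp hj).2
    exact Fin.ne_of_val_ne (by omega)
  rw [pd_coord_mul_of_ne hij (hf.differentiable (by simp)),
    pd_coord_mul_of_ne hij ((contDiff_pd hf j).differentiable (by simp))]

theorem iterate_lapP_coord_mul {i : Fin n} (hi : n - 1 ≤ i) (hf : ContDiff ℝ ∞ f) (k : ℕ) :
    lapP^[k] (fun x => (x i : ℂ) * f x) = fun x => x i * lapP^[k] f x := by
  induction k generalizing f with
  | zero => rfl
  | succ k ih =>
    rw [Function.iterate_succ_apply, lapP_coord_mul hi hf, ih (contDiff_lapP hf),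
      ← Function.iterate_succ_apply]

theorem iterate_pd_coord_mul_self (i : Fin n) (hf : ContDiff ℝ ∞ f) (m : ℕ) :
    (pd i)^[m + 1] (fun x => (x i : ℂ) * f x)
      = fun x => ((m : ℂ) + 1) * (pd i)^[m] f x + x i * (pd i)^[m + 1] f x := by
  have hdiff : ∀ k, Differentiable ℝ ((pd i)^[k] f) := fun k =>
    (contDiff_iterate_pd hf i k).differentiable (by simp)
  induction m with
  | zero => simpa using pd_coord_mul_self i (hdiff 0)
  | succ m ih =>
    have hcoord : Differentiable ℝ fun x : Fin n → ℝ => (x i : ℂ) := by fun_prop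
    have hfirst : Differentiable ℝ fun x => ((m : ℂ) + 1) * (pd i)^[m] f x :=
      (hdiff m).const_mul _
    have hsecond : Differentiable ℝ fun x => (x i : ℂ) * (pd i)^[m + 1] f x :=
      hcoord.mul (hdiff (m + 1))
    rw [Function.iterate_succ_apply', ih, pd_add i hfirst hsecond, pd_const_mul i (hdiff m),
      pd_coord_mul_self i (hdiff (m + 1))]
    funext x
    simp only [← Function.iterate_succ_apply' (pd i)]
    push_cast
    ring

theorem iterate_pd_coord_mul_self_apply_zero (i : Fin n) (hf : ContDiff ℝ ∞ f) (m : ℕ) :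
    (pd i)^[m] (fun x => (x i : ℂ) * f x) 0 = m * (pd i)^[m - 1] f 0 := by
  cases m with
  | zero => simp
  | succ m => simp [iterate_pd_coord_mul_self i hf m]

theorem prod_gegenbauer_succ (α : ℂ) {L k : ℕ} (hk : 2 * k ≤ L) :
    ∏ m ∈ Finset.Ico ((L + 1 + 1) / 2) (L + 1 - k), (α + m)
      = gam α (L + 1) * ∏ m ∈ Finset.Ico ((L + 1) / 2) (L - k), (α + 1 + m) := by
  have hshift : ∏ m ∈ Finset.Ico ((L + 1) / 2) (L - k), (α + 1 + m)
      = ∏ m ∈ Finset.Ico ((L + 1) / 2 + 1) (L - k + 1), (α + m) := by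
    rw [← Finset.prod_Ico_add']
    refine Finset.prod_congr rfl fun m _ => ?_
    push_cast
    ring
  rw [hshift, show L + 1 - k = L - k + 1 by omega]
  rcases Nat.even_or_odd' L with ⟨r, rfl | rfl⟩
  · have hgam : gam α (2 * r + 1) = 1 := by rw [gam, if_pos (by omega)]
    rw [hgam, one_mul, show (2 * r + 1 + 1) / 2 = r + 1 by omega,
      show (2 * r + 1) / 2 = r by omega]
  · have hgam : gam α (2 * r + 1 + 1) = α + (r + 1 : ℕ) := by
      rw [gam, if_neg (by omega), show (2 * r + 1 + 1) / 2 = r + 1 by omega]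
    rw [hgam, show (2 * r + 1 + 1 + 1) / 2 = r + 1 by omega,
      show (2 * r + 1 + 1) / 2 = r + 1 by omega, Finset.prod_eq_prod_Ico_succ_bot (by omega)]

/-- Coefficientwise form of `d/dz C̃_{L+1}^α = 2 γ(α, L+1) C̃_L^{α+1}`. -/
theorem gegenCoeff_succ_mul (α : ℂ) {L k : ℕ} (hk : 2 * k ≤ L) :
    gegenCoeff α (L + 1) k * ((L - 2 * k + 1 : ℕ) : ℂ)
      = 2 * gam α (L + 1) * gegenCoeff (α + 1) L k := by
  rw [gegenCoeff, gegenCoeff, prod_gegenbauer_succ α hk,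
    show L + 1 - 2 * k = L - 2 * k + 1 by omega, Nat.factorial_succ, pow_succ]
  have := Nat.cast_add_one_ne_zero (R := ℂ) (L - 2 * k)
  have := Nat.cast_ne_zero (R := ℂ) |>.mpr (Nat.factorial_ne_zero k)
  have := Nat.cast_ne_zero (R := ℂ) |>.mpr (Nat.factorial_ne_zero (L - 2 * k))
  push_cast
  field_simp

theorem Kact_coord_mul_last (hn : 0 < n) (lam : ℂ) (L : ℕ) (hf : ContDiff ℝ ∞ f) :
    Kact n lam L (fun x => (x ⟨n - 1, by omega⟩ : ℂ) * f x)
      = -2 * gam (lam - ((n : ℂ) - 1) / 2) L * Kact n (lam + 1) (L - 1) f := by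
  have hvalue : ∀ k, pdLast^[L - 2 * k] (lapP^[k] fun x => (x ⟨n - 1, by omega⟩ : ℂ) * f x) 0
      = ((L - 2 * k : ℕ) : ℂ) * pdLast^[L - 2 * k - 1] (lapP^[k] f) 0 := fun k => by
    rw [pdLast_eq_pd hn, iterate_lapP_coord_mul le_rfl hf,
      iterate_pd_coord_mul_self_apply_zero _ (contDiff_iterate_lapP hf k)]
  cases L with
  | zero => simp [Kact]
  | succ L =>
    set α := lam - ((n : ℂ) - 1) / 2
    have hα : lam + 1 - ((n : ℂ) - 1) / 2 = α + 1 := by ring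
    rw [Kact, Kact, if_pos (by positivity), if_pos (by simp), Int.toNat_natCast,
      show ((L + 1 : ℕ) : ℤ) - 1 = L by push_cast; ring, Int.toNat_natCast, hα, Finset.mul_sum,
      ← Finset.sum_subset
        (Finset.range_subset_range.mpr (show L / 2 + 1 ≤ (L + 1) / 2 + 1 by omega))]
    · refine Finset.sum_congr rfl fun k hkL => ?_
      have hk : 2 * k ≤ L := by have := Finset.mem_range.mp hkL; omega
      rw [hvalue, show L + 1 - 2 * k = L - 2 * k + 1 by omega, Nat.add_sub_cancel, pow_succ]
      linear_combination (-(-1 : ℂ) ^ k * (-1 : ℂ) ^ (L - 2 * k) *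
        pdLast^[L - 2 * k] (lapP^[k] f) 0) * gegenCoeff_succ_mul α hk
    -- for even `L + 1`, the top term `k = (L + 1) / 2` has no `∂_n` left and vanishes
    · intro k _ hkL
      have hk : L + 1 - 2 * k = 0 := by have := Finset.mem_range.not.mp hkL; omega
      rw [hvalue, hk, Nat.cast_zero, zero_mul, mul_zero, mul_zero, mul_zero]

/-- `x_n·𝒦_{λ,ν} = −2 γ(λ − (n−1)/2, ν−λ)·𝒦_{λ+1,ν}` as tempered distributions on ℝ^n,
tested against an arbitrary Schwartz function `φ`; `(x_n·T)(φ) = T(x_n φ)`. -/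
theorem stmt11 (n : ℕ) (hn : 2 ≤ n) (lam : ℂ) (l : ℤ) (hl : 0 ≤ l)
    (φ : SchwartzMap (Fin n → ℝ) ℂ) :
    Kact n lam l (fun x => (x ⟨n - 1, by omega⟩ : ℂ) * φ x)
      = -2 * gam (lam - ((n : ℂ) - 1) / 2) l.toNat * Kact n (lam + 1) (l - 1) ⇑φ := by
  lift l to ℕ using hl
  exact Kact_coord_mul_last (by omega) lam l (φ.smooth ⊤)
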